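/- arXiv:2009.12139 — 5 statements merged into one kernel-verified Lean document; each statement's English description precedes it below -/
import Mathlib

section
/- The dual volume LP infimum is not attained: every continuous function w : B → ℝ with w(x) ≥ 0 for all x ∈ B and w(x) ≥ 1 for all x ∈ K satisfies ∫_B w dλ > λ(K). -/
/-!
Take a boundary point `x₀` of `K`. There `g = 0` and `∇g ≠ 0`, so `x₀` is not a local minimum of
`g` and `g < 0` somewhere in every neighbourhood of `x₀`. Since `w(x₀) ≥ 1`, `w > 0` near `x₀`;
hence `B \ K` contains a nonempty open set `S` on which `w > 0`, and
`∫_B w ≥ ∫_K w + ∫_S w > λ(K)`.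
-/

open MeasureTheory Set Filter Topology
open scoped ENNReal

/-- No differentiability is needed: `IsLocalMin.fderiv_eq_zero` also covers the junk value `0`. -/
theorem frequently_lt_of_gradient_ne_zero {E : Type*} [NormedAddCommGroup E]
    [InnerProductSpace ℝ E] [CompleteSpace E] {G : E → ℝ} {x₀ : E} (h : gradient G x₀ ≠ 0) :
    ∃ᶠ x in 𝓝 x₀, G x < G x₀ := by
  contrapose! h
  simp [gradient, IsLocalMin.fderiv_eq_zero h]

theorem exists_isOpen_subset_nonempty_lt_of_frequently {X : Type*} [TopologicalSpace X]
    {G : X → ℝ} (hG : Continuous G) {x₀ : X} {U : Set X} (hU : U ∈ 𝓝 x₀)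
    (h : ∃ᶠ x in 𝓝 x₀, G x < G x₀) :
    ∃ S ⊆ U, IsOpen S ∧ S.Nonempty ∧ ∀ x ∈ S, G x < G x₀ := by
  obtain ⟨V, hVU, hV, hx₀V⟩ := mem_nhds_iff.mp hU
  obtain ⟨x, hxG, hxV⟩ := (h.and_eventually (hV.mem_nhds hx₀V)).exists
  exact ⟨V ∩ {x | G x < G x₀}, inter_subset_left.trans hVU,
    hV.inter (isOpen_lt hG continuous_const), ⟨x, hxV, hxG⟩, fun _ hy => hy.2⟩

theorem measureReal_lt_setIntegral_of_pos_on_disjoint {α : Type*} [MeasurableSpace α]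
    {μ : Measure α} {w : α → ℝ} {B K S : Set α} (hK : MeasurableSet K) (hS : MeasurableSet S)
    (hKB : K ⊆ B) (hSB : S ⊆ B) (hKS : Disjoint K S) (hμK : μ K ≠ ∞) (hμS : μ S ≠ 0)
    (hw : IntegrableOn w B μ) (hw₀ : 0 ≤ᵐ[μ.restrict B] w) (hwK : ∀ x ∈ K, 1 ≤ w x)
    (hwS : ∀ x ∈ S, 0 < w x) :
    μ.real K < ∫ x in B, w x ∂μ := by
  have hS_pos : 0 < ∫ x in S, w x ∂μ := by
    rw [setIntegral_pos_iff_support_of_nonneg_ae ((ae_restrict_iff' hS).mpr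
      (ae_of_all _ fun x hx => (hwS x hx).le)) (hw.mono_set hSB),
      inter_eq_self_of_subset_right fun x hx => Function.mem_support.mpr (hwS x hx).ne']
    exact pos_iff_ne_zero.mpr hμS
  calc μ.real K ≤ ∫ x in K, w x ∂μ := by
        simpa using setIntegral_ge_of_const_le_real hK hμK hwK (hw.mono_set hKB)
    _ < (∫ x in K, w x ∂μ) + ∫ x in S, w x ∂μ := lt_add_of_pos_right _ hS_pos
    _ = ∫ x in K ∪ S, w x ∂μ :=
        (setIntegral_union hKS hS (hw.mono_set hKB) (hw.mono_set hSB)).symm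
    _ ≤ ∫ x in B, w x ∂μ := setIntegral_mono_set hw hw₀ (union_subset hKB hSB).eventuallyLE

theorem dual_volume_LP_not_attained_general
    (n : ℕ)
    (g : MvPolynomial (Fin n) ℝ)
    (G : EuclideanSpace ℝ (Fin n) → ℝ)
    (hG : ∀ x, G x = MvPolynomial.eval (fun i => x i) g)
    (K Ω : Set (EuclideanSpace ℝ (Fin n)))
    (hK : K = {x | 0 ≤ G x})
    (hKcpt : IsCompact K)
    (hfront : frontier Ω = frontier K)
    (hfrontK : frontier K = {x ∈ K | G x = 0})
    (hfrontne : (frontier K).Nonempty)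
    (hgradne : ∀ x ∈ frontier Ω, gradient G x ≠ 0)
    (B : Set (EuclideanSpace ℝ (Fin n)))
    (hBcpt : IsCompact B) (hKB : K ⊆ interior B)
    (w : EuclideanSpace ℝ (Fin n) → ℝ)
    (hw : ContinuousOn w B)
    (hwpos : ∀ x ∈ B, 0 ≤ w x)
    (hwK : ∀ x ∈ K, 1 ≤ w x) :
    (volume K).toReal < ∫ x in B, w x := by
  have hGcont : Continuous G := by
    rw [funext hG]
    exact (MvPolynomial.continuous_eval g).comp (PiLp.continuous_ofLp 2 _)
  obtain ⟨x₀, hx₀⟩ := hfrontne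
  have hgrad : gradient G x₀ ≠ 0 := hgradne x₀ (hfront ▸ hx₀)
  rw [hfrontK] at hx₀
  obtain ⟨hx₀K, hGx₀⟩ := hx₀
  have hB_nhds : B ∈ 𝓝 x₀ := mem_interior_iff_mem_nhds.mp (hKB hx₀K)
  have hw_pos_near : ∀ᶠ x in 𝓝 x₀, 0 < w x :=
    (hw.continuousAt hB_nhds).eventually (eventually_gt_nhds (zero_lt_one.trans_le (hwK x₀ hx₀K)))
  obtain ⟨S, hSU, hSopen, hSne, hGS⟩ := exists_isOpen_subset_nonempty_lt_of_frequently hGcont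
    (inter_mem (isOpen_interior.mem_nhds (hKB hx₀K)) hw_pos_near)
    (frequently_lt_of_gradient_ne_zero hgrad)
  have hKS : Disjoint K S := by
    refine disjoint_left.mpr fun x hxK hxS => (hGS x hxS).not_ge ?_
    simpa [hK, hGx₀] using hxK
  exact measureReal_lt_setIntegral_of_pos_on_disjoint hKcpt.isClosed.measurableSet
    hSopen.measurableSet (hKB.trans interior_subset) (fun x hx => interior_subset (hSU hx).1)
    hKS hKcpt.measure_lt_top.ne (hSopen.measure_pos volume hSne).ne'
    (hw.integrableOn_compact hBcpt) (ae_restrict_of_forall_mem hBcpt.isClosed.measurableSet hwpos)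
    hwK fun x hx => (hSU hx).2

/-- the dual volume LP infimum is not attained: every feasible continuous `w`
has integral strictly larger than `λ(K)`. -/
theorem dual_volume_LP_not_attained
    (n : ℕ) (hn : 1 ≤ n)
    (g : MvPolynomial (Fin n) ℝ)
    (G : EuclideanSpace ℝ (Fin n) → ℝ)
    (hG : ∀ x, G x = MvPolynomial.eval (fun i => x i) g)
    (K Ω : Set (EuclideanSpace ℝ (Fin n)))
    (hK : K = {x | 0 ≤ G x})
    (hΩ : Ω = {x | 0 < G x})
    (hKcpt : IsCompact K)
    (hΩne : Ω.Nonempty)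
    (hΩopen : IsOpen Ω)
    (hclos : closure Ω = K)
    (hfront : frontier Ω = frontier K)
    (hfrontK : frontier K = {x ∈ K | G x = 0})
    (hfrontne : (frontier K).Nonempty)
    (hgradne : ∀ x ∈ frontier Ω, gradient G x ≠ 0)
    (B : Set (EuclideanSpace ℝ (Fin n)))
    (hBcpt : IsCompact B) (hKB : K ⊆ interior B)
    (w : EuclideanSpace ℝ (Fin n) → ℝ)
    (hw : ContinuousOn w B)
    (hwpos : ∀ x ∈ B, 0 ≤ w x)
    (hwK : ∀ x ∈ K, 1 ≤ w x) :
    (volume K).toReal < ∫ x in B, w x :=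
  dual_volume_LP_not_attained_general n g G hG K Ω hK hKcpt hfront hfrontK hfrontne hgradne B hBcpt
    hKB w hw hwpos hwK
end

section
/- Properties of the constructed source term: the function f(x) := 1 − g(x) ∑_{i=1}^N 𝟙_{Ωᵢ}(x)/m_{Ωᵢ}(g) satisfies: (i) f is Lipschitz continuous on K; (ii) f(x) ≤ 1 for all x ∈ K; (iii) f(x) = 1 for all x ∈ ∂Ω; and (iv) ∫_{Ωᵢ} f dλ = 0 for every i ∈ {1,…,N}. -/
open MeasureTheory Set

private lemma aux_mem_frontier {X : Type*} [TopologicalSpace X] {s t : Set X}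
    (hs : IsPreconnected s) (ht : IsClosed t)
    (hx : (s ∩ t).Nonempty) (hy : (s \ t).Nonempty) :
    ∃ z ∈ s, z ∈ t ∧ z ∉ interior t := by
  by_contra h
  push_neg at h
  have hsub : s ⊆ interior t ∪ tᶜ := fun z hz => by
    by_cases hzt : z ∈ t
    · exact Or.inl (h z hz hzt)
    · exact Or.inr hzt
  have hdisj : Disjoint (interior t) tᶜ :=
    Set.disjoint_left.mpr fun z hz hz' => hz' (interior_subset hz)
  rcases hs.subset_or_subset isOpen_interior ht.isOpen_compl hdisj hsub with h1 | h2
  · obtain ⟨y, hys, hyt⟩ := hy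
    exact hyt (interior_subset (h1 hys))
  · obtain ⟨x, hxs, hxt⟩ := hx
    exact (h2 hxs) hxt

private lemma contDiff_evalG (n : ℕ) (g : MvPolynomial (Fin n) ℝ) :
    ContDiff ℝ (⊤ : ℕ∞) (fun x : EuclideanSpace ℝ (Fin n) => MvPolynomial.eval (fun i => x i) g) := by
  induction g using MvPolynomial.induction_on with
  | C a => simpa using contDiff_const (c := a)
  | add p q hp hq => simpa using hp.add hq
  | mul_X p i hp =>
      have hproj : ContDiff ℝ (⊤ : ℕ∞) (fun x : EuclideanSpace ℝ (Fin n) => x i) :=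
        (EuclideanSpace.proj (𝕜 := ℝ) i).contDiff
      simpa using hp.mul hproj

/-- properties of the constructed source term
`f = 1 - g ∑ᵢ 𝟙_{Ωᵢ}/m_{Ωᵢ}(g)`. -/
theorem source_term_properties
    (n : ℕ) (hn : 1 ≤ n)
    (g : MvPolynomial (Fin n) ℝ)
    (G : EuclideanSpace ℝ (Fin n) → ℝ)
    (hG : ∀ x, G x = MvPolynomial.eval (fun i => x i) g)
    (K Ω : Set (EuclideanSpace ℝ (Fin n)))
    (hK : K = {x | 0 ≤ G x})
    (hΩ : Ω = {x | 0 < G x})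
    (hKcpt : IsCompact K)
    (hΩne : Ω.Nonempty)
    (hΩopen : IsOpen Ω)
    (hclos : closure Ω = K)
    (hfront : frontier Ω = frontier K)
    (hfrontK : frontier K = {x ∈ K | G x = 0})
    (hgradne : ∀ x ∈ frontier Ω, gradient G x ≠ 0)
    (N : ℕ) (Om : Fin N → Set (EuclideanSpace ℝ (Fin n)))
    (hOmopen : ∀ i, IsOpen (Om i))
    (hOmconn : ∀ i, IsConnected (Om i))
    (hOmU : Ω = ⋃ i, Om i)
    (hOmdisj : ∀ i j, i ≠ j → Disjoint (closure (Om i)) (closure (Om j)))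
    (m : Fin N → ℝ)
    (hm : ∀ i, m i = (∫ x in Om i, G x) / (volume (Om i)).toReal)
    (hmpos : ∀ i, 0 < m i)
    (f : EuclideanSpace ℝ (Fin n) → ℝ)
    (hf : ∀ x, f x = 1 - G x * ∑ i, (Om i).indicator (fun _ => (1 : ℝ)) x / m i) :
    (∃ L : NNReal, LipschitzOnWith L f K) ∧
    (∀ x ∈ K, f x ≤ 1) ∧
    (∀ x ∈ frontier Ω, f x = 1) ∧
    (∀ i, ∫ x in Om i, f x = 0) := by
  -- continuity / smoothness of G
  have hGcd : ContDiff ℝ (⊤ : ℕ∞) G := by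
    rw [show G = fun x => MvPolynomial.eval (fun i => x i) g from funext hG]
    exact contDiff_evalG n g
  have hGcont : Continuous G := hGcd.continuous
  -- basic set facts
  have hGK : ∀ x ∈ K, 0 ≤ G x := fun x hx => by rw [hK] at hx; exact hx
  have hOmΩ : ∀ i, Om i ⊆ Ω := fun i => by rw [hOmU]; exact Set.subset_iUnion Om i
  have hclOmK : ∀ i, closure (Om i) ⊆ K := fun i => by
    rw [← hclos]; exact closure_mono (hOmΩ i)
  have hGzero : ∀ x ∈ K, x ∉ Ω → G x = 0 := fun x hxK hxΩ => by
    rw [hK] at hxK; rw [hΩ] at hxΩ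
    exact le_antisymm (not_lt.mp hxΩ) hxK
  have hnotΩ : ∀ x, (∀ i, x ∉ Om i) → x ∉ Ω := fun x h hx => by
    rw [hOmU] at hx; obtain ⟨i, hi⟩ := Set.mem_iUnion.mp hx; exact h i hi
  have hOmdisj' : ∀ i j, i ≠ j → ∀ x, x ∈ Om i → x ∉ Om j := fun i j hij x hxi hxj =>
    Set.disjoint_left.mp (hOmdisj i j hij) (subset_closure hxi) (subset_closure hxj)
  have hbd : ∀ i x, x ∈ closure (Om i) → x ∉ Om i → G x = 0 := by
    intro i x hxc hxn
    refine hGzero x (hclOmK i hxc) (hnotΩ x ?_)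
    intro j hxj
    by_cases hij : j = i
    · exact hxn (hij ▸ hxj)
    · exact Set.disjoint_left.mp (hOmdisj j i hij) (subset_closure hxj) hxc
  have hsum : ∀ i x, x ∈ Om i →
      (∑ j, (Om j).indicator (fun _ => (1:ℝ)) x / m j) = (m i)⁻¹ := by
    intro i x hx
    rw [Finset.sum_eq_single i]
    · rw [Set.indicator_of_mem hx, one_div]
    · intro j _ hji
      rw [Set.indicator_of_notMem (hOmdisj' i j hji.symm x hx), zero_div]
    · intro h; exact absurd (Finset.mem_univ i) h
  have hfi : ∀ i x, x ∈ closure (Om i) → f x = 1 - G x / m i := by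
    intro i x hx
    by_cases hxo : x ∈ Om i
    · rw [hf, hsum i x hxo, div_eq_mul_inv]
    · rw [hf, hbd i x hx hxo]; simp
  have hKU : K = ⋃ i, closure (Om i) := by
    rw [← hclos, hOmU, closure_iUnion_of_finite]
  have hmemK : ∀ x ∈ K, ∃ i, x ∈ closure (Om i) := fun x hx => by
    rw [hKU] at hx; exact Set.mem_iUnion.mp hx
  -- Lipschitz constant for G
  obtain ⟨R, hR⟩ := hKcpt.isBounded.subset_closedBall 0
  have hBconv : Convex ℝ (Metric.closedBall (0 : EuclideanSpace ℝ (Fin n)) R) :=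
    convex_closedBall 0 R
  have hBcpt : IsCompact (Metric.closedBall (0 : EuclideanSpace ℝ (Fin n)) R) :=
    isCompact_closedBall 0 R
  have hfd : Continuous (fderiv ℝ G) := hGcd.continuous_fderiv (by simp)
  obtain ⟨C0, hC0⟩ := hBcpt.exists_bound_of_continuousOn hfd.continuousOn
  set C : NNReal := Real.toNNReal C0 with hCdef
  have hGlip : LipschitzOnWith C G (Metric.closedBall 0 R) := by
    apply hBconv.lipschitzOnWith_of_nnnorm_hasFDerivWithin_le
      (f' := fun x => fderiv ℝ G x)
      (fun x _ => ((hGcd.differentiable (by simp) x).hasFDerivAt).hasFDerivWithinAt)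
    intro x hx
    rw [← NNReal.coe_le_coe, coe_nnnorm, hCdef, Real.coe_toNNReal']
    exact (hC0 x hx).trans (le_max_left _ _)
  set M : ℝ := ∑ i, (m i)⁻¹ with hMdef
  have hMi : ∀ i, (m i)⁻¹ ≤ M :=
    fun i => Finset.single_le_sum (fun j _ => inv_nonneg.mpr (hmpos j).le) (Finset.mem_univ i)
  have hMnn : 0 ≤ M := Finset.sum_nonneg fun j _ => inv_nonneg.mpr (hmpos j).le
  have hcross : ∀ i x y, x ∈ closure (Om i) → y ∈ K → y ∉ closure (Om i) →
      |G x| ≤ (C : ℝ) * dist x y := by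
    intro i x y hx hy hyn
    obtain ⟨z, hzseg, hzt, hzint⟩ := aux_mem_frontier
      (convex_segment x y).isPreconnected isClosed_closure
      ⟨x, left_mem_segment ℝ x y, hx⟩ ⟨y, right_mem_segment ℝ x y, hyn⟩
    have hzOm : z ∉ Om i := fun h =>
      hzint (interior_maximal subset_closure (hOmopen i) h)
    have hGz : G z = 0 := hbd i z hzt hzOm
    have hxK : x ∈ K := hclOmK i hx
    have hzK : z ∈ K := hclOmK i hzt
    have hd : dist x z + dist z y = dist x y := dist_add_dist_of_mem_segment hzseg
    calc |G x| = dist (G x) (G z) := by rw [Real.dist_eq, hGz, sub_zero]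
      _ ≤ (C : ℝ) * dist x z := hGlip.dist_le_mul x (hR hxK) z (hR hzK)
      _ ≤ (C : ℝ) * dist x y := by
          apply mul_le_mul_of_nonneg_left _ C.coe_nonneg
          have := dist_nonneg (x := z) (y := y)
          linarith
  constructor
  · -- Lipschitz
    refine ⟨Real.toNNReal (2 * (C : ℝ) * M), LipschitzOnWith.of_dist_le_mul ?_⟩
    intro x hx y hy
    obtain ⟨i, hxi⟩ := hmemK x hx
    obtain ⟨j, hyj⟩ := hmemK y hy
    have hL : (Real.toNNReal (2 * (C : ℝ) * M) : ℝ) = 2 * (C : ℝ) * M :=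
      Real.coe_toNNReal _ (by positivity)
    rw [hL, hfi i x hxi, hfi j y hyj, Real.dist_eq]
    by_cases hij : i = j
    · subst hij
      have heq : (1 - G x / m i) - (1 - G y / m i) = (G y - G x) / m i := by ring
      rw [heq, abs_div, abs_of_pos (hmpos i)]
      have h1 : |G y - G x| ≤ (C : ℝ) * dist x y := by
        have := hGlip.dist_le_mul y (hR (hclOmK i hyj)) x (hR hx)
        rw [Real.dist_eq, dist_comm] at this
        exact this
      have h2 : |G y - G x| / m i ≤ ((C : ℝ) * dist x y) * M := by
        rw [div_eq_mul_inv]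
        exact mul_le_mul h1 (hMi i) (inv_nonneg.mpr (hmpos i).le) (by positivity)
      nlinarith [dist_nonneg (x := x) (y := y), C.coe_nonneg, hMnn,
        mul_nonneg (mul_nonneg C.coe_nonneg (dist_nonneg (x := x) (y := y))) hMnn]
    · have hyni : y ∉ closure (Om i) := fun h =>
        Set.disjoint_left.mp (hOmdisj i j hij) h hyj
      have hxnj : x ∉ closure (Om j) := fun h =>
        Set.disjoint_left.mp (hOmdisj i j hij) hxi h
      have h1 : |G x| ≤ (C : ℝ) * dist x y := hcross i x y hxi hy hyni
      have h2 : |G y| ≤ (C : ℝ) * dist x y := by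
        have := hcross j y x hyj hx hxnj
        rwa [dist_comm] at this
      have heq : (1 - G x / m i) - (1 - G y / m j) = G y / m j - G x / m i := by ring
      rw [heq]
      have hbound : |G y / m j - G x / m i| ≤ |G y| / m j + |G x| / m i := by
        calc |G y / m j - G x / m i| ≤ |G y / m j| + |G x / m i| := abs_sub _ _
          _ = |G y| / m j + |G x| / m i := by
              rw [abs_div, abs_div, abs_of_pos (hmpos j), abs_of_pos (hmpos i)]
      have hx' : |G x| / m i ≤ ((C : ℝ) * dist x y) * M := by
        rw [div_eq_mul_inv]
        exact mul_le_mul h1 (hMi i) (inv_nonneg.mpr (hmpos i).le) (by positivity)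
      have hy' : |G y| / m j ≤ ((C : ℝ) * dist x y) * M := by
        rw [div_eq_mul_inv]
        exact mul_le_mul h2 (hMi j) (inv_nonneg.mpr (hmpos j).le) (by positivity)
      calc |G y / m j - G x / m i| ≤ ((C : ℝ) * dist x y) * M + ((C : ℝ) * dist x y) * M := by
            linarith
        _ = 2 * (C : ℝ) * M * dist x y := by ring
  refine ⟨?_, ?_, ?_⟩
  · -- f ≤ 1 on K
    intro x hx
    rw [hf]
    have h1 : 0 ≤ G x := hGK x hx
    have h2 : 0 ≤ ∑ i, (Om i).indicator (fun _ => (1:ℝ)) x / m i :=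
      Finset.sum_nonneg fun i _ =>
        div_nonneg (Set.indicator_nonneg (fun _ _ => zero_le_one) x) (hmpos i).le
    nlinarith
  · -- f = 1 on frontier Ω
    intro x hx
    rw [hfront, hfrontK] at hx
    obtain ⟨hxK, hGx⟩ := hx
    rw [hf, hGx]; ring
  · -- integral zero
    intro i
    have hmeas : MeasurableSet (Om i) := (hOmopen i).measurableSet
    have hsubK : Om i ⊆ K := fun x hx => hclOmK i (subset_closure hx)
    have hfin : volume (Om i) ≠ ⊤ :=
      ((measure_mono hsubK).trans_lt hKcpt.measure_lt_top).ne
    have hGint : IntegrableOn G (Om i) volume :=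
      (hGcont.continuousOn.integrableOn_compact hKcpt).mono_set hsubK
    have hvol : (volume (Om i)).toReal ≠ 0 := by
      intro h
      have h2 := hm i
      rw [h, div_zero] at h2
      exact (hmpos i).ne' h2
    have hint : ∫ x in Om i, f x = ∫ x in Om i, (1 - G x / m i) :=
      setIntegral_congr_fun hmeas (fun x hx => hfi i x (subset_closure hx))
    have hiG : ∫ x in Om i, G x = m i * (volume (Om i)).toReal :=
      ((eq_div_iff hvol).mp (hm i)).symm
    rw [hint, integral_sub (integrableOn_const (C := (1:ℝ)) hfin) (hGint.div_const _),
      integral_div, setIntegral_const, hiG, smul_eq_mul, mul_one,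
      mul_comm, mul_div_assoc, div_self (hmpos i).ne', mul_one, measureReal_def, sub_self]
end

section
/- Moments of the Lebesgue measure via positively homogeneous functions: let d ∈ ℝ, d ≠ 0, and let h : ℝⁿ → [0,∞) be Borel measurable and positively homogeneous of degree d, i.e. h(t x) = t^d h(x) for all x ∈ ℝⁿ ∖ {0} and t > 0. Let B_h := {x ∈ ℝⁿ : h(x) ≤ 1} and assume λ(B_h) < ∞. Then for every multi-index k ∈ ℕⁿ, ∫_{B_h} x^k dx = Γ(1 + (n + |k|)/d)⁻¹ ∫_{ℝⁿ} x^k e^{−h(x)} dx, where |k| = k₁ + ⋯ + kₙ and x^k = x₁^{k₁} ⋯ xₙ^{kₙ}. -/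
open MeasureTheory Set Function Module Real
open scoped ENNReal Pointwise

/-! Writing `e^{-h(x)} = ∫_{h(x)}^∞ e^{-s} ds` and exchanging the integrals gives
`∫ g e^{-h} = ∫_0^∞ e^{-s} (∫_{h ≤ s} g) ds`. By homogeneity the sublevel set `{h ≤ s}` is
`s^{1/d} • B_h` up to the origin, so for `g` homogeneous of degree `a` (the monomial `x^k`, with
`a = |k|`) the inner integral is `s^{(n+a)/d} ∫_{B_h} g`, and what remains is the Gamma integral.
The same computation for `‖g‖` shows that the two sides are integrable simultaneously.
Finiteness of `λ(B_h)` forces `d > 0`: otherwise `λ{h ≤ s} = s^{n/d} λ(B_h)` would decrease in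
`s`, making `λ(B_h) = 0` and then `ℝⁿ = ⋃ N, {h ≤ N}` null. -/

def IsPosHomogeneous {E : Type*} [Zero E] [SMul ℝ E] (f : E → ℝ) (a : ℝ) : Prop :=
  ∀ x : E, x ≠ 0 → ∀ t : ℝ, 0 < t → f (t • x) = t ^ a * f x

theorem isPosHomogeneous_monomial {ι : Type*} [Fintype ι] (k : ι → ℕ) :
    IsPosHomogeneous (fun x : ι → ℝ => ∏ i, x i ^ k i) (∑ i, k i : ℕ) := by
  intro x _ t _
  simp only [Pi.smul_apply, smul_eq_mul, mul_pow, Finset.prod_mul_distrib,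
    Finset.prod_pow_eq_pow_sum, rpow_natCast]

theorem integral_indicator_Ici_mul_exp_neg (c a : ℝ) :
    ∫ s, (Ici a).indicator (fun s => c * exp (-s)) s = c * exp (-a) := by
  rw [integral_indicator measurableSet_Ici, integral_const_mul, integral_Ici_eq_integral_Ioi,
    integral_exp_neg_Ioi]

theorem integrableOn_Ici_exp_neg (a : ℝ) : IntegrableOn (fun s => exp (-s)) (Ici a) :=
  (integrableOn_Ici_iff_integrableOn_Ioi).2 (integrableOn_exp_neg_Ioi a)

theorem lintegral_Ici_exp_neg (a : ℝ) :
    ∫⁻ s in Ici a, ENNReal.ofReal (exp (-s)) = ENNReal.ofReal (exp (-a)) := by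
  rw [← ofReal_integral_eq_lintegral_ofReal (integrableOn_Ici_exp_neg a)
    (ae_of_all _ fun s => (exp_pos _).le), integral_Ici_eq_integral_Ioi, integral_exp_neg_Ioi]

theorem integral_exp_neg_mul_rpow_eq_Gamma {q : ℝ} (hq : -1 < q) :
    ∫ s in Ioi 0, exp (-s) * s ^ q = Gamma (1 + q) := by
  rw [Gamma_eq_integral (by linarith), add_sub_cancel_left]

theorem lintegral_exp_neg_mul_rpow_eq_Gamma {q : ℝ} (hq : -1 < q) :
    ∫⁻ s in Ioi 0, ENNReal.ofReal (exp (-s) * s ^ q) = ENNReal.ofReal (Gamma (1 + q)) := by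
  have hint := GammaIntegral_convergent (s := 1 + q) (by linarith)
  rw [add_sub_cancel_left] at hint
  rw [← integral_exp_neg_mul_rpow_eq_Gamma hq, ofReal_integral_eq_lintegral_ofReal hint]
  filter_upwards [self_mem_ae_restrict measurableSet_Ioi] with s (hs : 0 < s)
  positivity

section LayerCake
variable {α : Type*} [MeasurableSpace α] {μ : Measure α} [SFinite μ] {φ : α → ℝ}

theorem lintegral_mul_exp_neg_eq_lintegral_sublevel {f : α → ℝ≥0∞} (hf : Measurable f)
    (hφ : Measurable φ) :
    ∫⁻ x, f x * ENNReal.ofReal (exp (-φ x)) ∂μ =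
      ∫⁻ s, ENNReal.ofReal (exp (-s)) * ∫⁻ x in {x | φ x ≤ s}, f x ∂μ := by
  let F : α → ℝ → ℝ≥0∞ := fun x s => {p : α × ℝ | φ p.1 ≤ p.2}.indicator
    (fun p => f p.1 * ENNReal.ofReal (exp (-p.2))) (x, s)
  have hF_x : ∀ x, F x = (Ici (φ x)).indicator (fun s => f x * ENNReal.ofReal (exp (-s))) :=
    fun x => rfl
  have hF_s : ∀ s, (F · s) = {x | φ x ≤ s}.indicator (fun x => f x * ENNReal.ofReal (exp (-s))) :=
    fun s => rfl
  have hF : Measurable (uncurry F) :=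
    ((hf.comp measurable_fst).mul (measurable_snd.neg.exp.ennreal_ofReal)).indicator
      (measurableSet_le (hφ.comp measurable_fst) measurable_snd)
  calc ∫⁻ x, f x * ENNReal.ofReal (exp (-φ x)) ∂μ = ∫⁻ x, (∫⁻ s, F x s) ∂μ := by
        congr 1 with x
        rw [hF_x, lintegral_indicator measurableSet_Ici, lintegral_const_mul _ (by fun_prop),
          lintegral_Ici_exp_neg]
    _ = ∫⁻ s, ∫⁻ x, F x s ∂μ := lintegral_lintegral_swap hF.aemeasurable
    _ = _ := by
        congr 1 with s
        rw [hF_s, lintegral_indicator (measurableSet_le hφ measurable_const),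
          lintegral_mul_const _ hf, mul_comm]

theorem integral_mul_exp_neg_eq_integral_sublevel {g : α → ℝ} (hg : Measurable g)
    (hφ : Measurable φ) (hint : Integrable (fun x => g x * exp (-φ x)) μ) :
    ∫ x, g x * exp (-φ x) ∂μ = ∫ s, exp (-s) * ∫ x in {x | φ x ≤ s}, g x ∂μ := by
  let G : α → ℝ → ℝ := fun x s => {p : α × ℝ | φ p.1 ≤ p.2}.indicator
    (fun p => g p.1 * exp (-p.2)) (x, s)
  have hG_x : ∀ x, G x = (Ici (φ x)).indicator (fun s => g x * exp (-s)) := fun x => rfl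
  have hG_s : ∀ s, (G · s) = {x | φ x ≤ s}.indicator (fun x => g x * exp (-s)) := fun s => rfl
  have hGm : Measurable (uncurry G) :=
    ((hg.comp measurable_fst).mul (measurable_snd.neg.exp)).indicator
      (measurableSet_le (hφ.comp measurable_fst) measurable_snd)
  have hGi : Integrable (uncurry G) (μ.prod volume) := by
    refine (integrable_prod_iff hGm.aestronglyMeasurable).2 ⟨ae_of_all _ fun x => ?_, ?_⟩
    · change Integrable (G x) volume
      rw [hG_x]
      exact IntegrableOn.integrable_indicator ((integrableOn_Ici_exp_neg (φ x)).const_mul (g x))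
        measurableSet_Ici
    · refine hint.norm.congr (ae_of_all _ fun x => ?_)
      change _ = ∫ s, ‖G x s‖
      simp_rw [hG_x, norm_indicator_eq_indicator_norm, norm_mul, norm_of_nonneg (exp_pos _).le,
        integral_indicator_Ici_mul_exp_neg]
  calc ∫ x, g x * exp (-φ x) ∂μ = ∫ x, (∫ s, G x s) ∂μ := by
        simp_rw [hG_x, integral_indicator_Ici_mul_exp_neg]
    _ = ∫ s, ∫ x, G x s ∂μ := integral_integral_swap hGi
    _ = _ := by
        congr 1 with s
        rw [hG_s, integral_indicator (measurableSet_le hφ measurable_const), integral_mul_const,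
          mul_comm]
end LayerCake

section AddHaar

variable {E : Type*} [NormedAddCommGroup E] [NormedSpace ℝ E] [FiniteDimensional ℝ E]
  [MeasurableSpace E] [BorelSpace E] (μ : Measure E) [μ.IsAddHaarMeasure]

theorem setLIntegral_comp_smul_of_pos (f : E → ℝ≥0∞) {R : ℝ} (s : Set E) (hR : 0 < R) :
    ∫⁻ x in s, f (R • x) ∂μ = ENNReal.ofReal ((R ^ finrank ℝ E)⁻¹) * ∫⁻ x in R • s, f x ∂μ := by
  let e : E ≃ᵐ E := (Homeomorph.smul (Units.mk0 R hR.ne')).toMeasurableEquiv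
  have hs : e ⁻¹' (R • s) = s := ext fun x => smul_mem_smul_set_iff₀ hR.ne' s x
  calc ∫⁻ x in s, f (R • x) ∂μ = ∫⁻ x in e ⁻¹' (R • s), f (e x) ∂μ := by rw [hs]; rfl
    _ = ∫⁻ y in R • s, f y ∂μ.map e := by
      rw [e.measurableEmbedding.restrict_map, e.measurableEmbedding.lintegral_map]
    _ = _ := by
      rw [show ⇑e = (R • ·) from rfl, Measure.map_addHaar_smul μ hR.ne', Measure.restrict_smul,
        lintegral_smul_measure, abs_of_pos (by positivity), smul_eq_mul]

end AddHaar

section Homogeneous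

variable {E : Type*} [NormedAddCommGroup E] [NormedSpace ℝ E] [FiniteDimensional ℝ E]
  [MeasurableSpace E] [BorelSpace E] [Nontrivial E] {μ : Measure E} [μ.IsAddHaarMeasure]
  {h g : E → ℝ} {a d : ℝ}

namespace IsPosHomogeneous

theorem setOf_le_ae_eq_smul (hh : IsPosHomogeneous h d) (hd : d ≠ 0) {s : ℝ} (hs : 0 < s) :
    {x | h x ≤ s} =ᵐ[μ] s ^ d⁻¹ • {x | h x ≤ 1} := by
  have hc : 0 < s ^ d⁻¹ := rpow_pos_of_pos hs _
  filter_upwards [μ.ae_ne 0] with x hx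
  change (h x ≤ s) = (x ∈ s ^ d⁻¹ • {x | h x ≤ 1})
  rw [mem_smul_set_iff_inv_smul_mem₀ hc.ne', mem_ofPred_eq, hh x hx _ (inv_pos.2 hc),
    inv_rpow hc.le, ← rpow_mul hs.le, inv_mul_cancel₀ hd, rpow_one, inv_mul_le_one₀ hs]

theorem measure_setOf_le (hh : IsPosHomogeneous h d) (hd : d ≠ 0) {s : ℝ} (hs : 0 < s) :
    μ {x | h x ≤ s} = ENNReal.ofReal (s ^ (finrank ℝ E / d)) * μ {x | h x ≤ 1} := by
  rw [measure_congr (hh.setOf_le_ae_eq_smul hd hs),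
    Measure.addHaar_smul_of_nonneg μ (rpow_nonneg hs.le _), ← rpow_natCast, ← rpow_mul hs.le,
    inv_mul_eq_div]

theorem pos_of_measure_lt_top (hh : IsPosHomogeneous h d) (hd : d ≠ 0)
    (hμ : μ {x | h x ≤ 1} < ∞) : 0 < d := by
  refine hd.lt_or_gt.resolve_left fun hneg => ?_
  have hnull : μ {x | h x ≤ 1} = 0 := by
    have hlt : ENNReal.ofReal (2 ^ (finrank ℝ E / d)) < 1 := by
      rw [ENNReal.ofReal_lt_one]
      exact rpow_lt_one_of_one_lt_of_neg one_lt_two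
        (div_neg_of_pos_of_neg (by exact_mod_cast finrank_pos) hneg)
    have hle : 1 * μ {x | h x ≤ 1} ≤ ENNReal.ofReal (2 ^ (finrank ℝ E / d)) * μ {x | h x ≤ 1} := by
      rw [one_mul, ← hh.measure_setOf_le hd two_pos]
      exact measure_mono fun x (hx : h x ≤ 1) => hx.trans one_le_two
    by_contra hne
    exact ((ENNReal.mul_le_mul_iff_left hne hμ.ne).1 hle).not_gt hlt
  have hcover : ⋃ N : ℕ, {x | h x ≤ N + 1} = univ :=
    eq_univ_of_forall fun x => mem_iUnion.2
      ⟨⌈h x⌉₊, show h x ≤ _ from (Nat.le_ceil _).trans (le_add_of_nonneg_right zero_le_one)⟩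
  refine (NeZero.ne μ) (Measure.measure_univ_eq_zero.1 ?_)
  rw [← hcover]
  exact measure_iUnion_null fun N => by
    rw [hh.measure_setOf_le hd (by positivity), hnull, mul_zero]

theorem setIntegral_smul_set (hg : IsPosHomogeneous g a) (S : Set E) {c : ℝ} (hc : 0 < c) :
    ∫ x in c • S, g x ∂μ = c ^ (finrank ℝ E + a) * ∫ x in S, g x ∂μ := by
  have hgc : ∫ x in S, g (c • x) ∂μ = c ^ a * ∫ x in S, g x ∂μ := by
    rw [← integral_const_mul]
    refine integral_congr_ae (ae_restrict_of_ae ?_)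
    filter_upwards [μ.ae_ne 0] with x hx using hg x hx c hc
  rw [rpow_add hc, rpow_natCast, mul_assoc, ← hgc, Measure.setIntegral_comp_smul_of_pos μ g _ hc,
    smul_eq_mul, mul_inv_cancel_left₀ (by positivity)]

theorem setLIntegral_enorm_smul_set (hg : IsPosHomogeneous g a) (S : Set E) {c : ℝ} (hc : 0 < c) :
    ∫⁻ x in c • S, ‖g x‖ₑ ∂μ = ENNReal.ofReal (c ^ (finrank ℝ E + a)) * ∫⁻ x in S, ‖g x‖ₑ ∂μ := by
  have hgc : ∫⁻ x in S, ‖g (c • x)‖ₑ ∂μ = ENNReal.ofReal (c ^ a) * ∫⁻ x in S, ‖g x‖ₑ ∂μ := by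
    rw [← lintegral_const_mul' _ _ ENNReal.ofReal_ne_top]
    refine lintegral_congr_ae (ae_restrict_of_ae ?_)
    filter_upwards [μ.ae_ne 0] with x hx
    rw [hg x hx c hc, enorm_mul, Real.enorm_of_nonneg (by positivity)]
  rw [rpow_add hc, rpow_natCast, ENNReal.ofReal_mul (by positivity), mul_assoc, ← hgc,
    setLIntegral_comp_smul_of_pos μ (‖g ·‖ₑ) _ hc, ← mul_assoc,
    ← ENNReal.ofReal_mul (by positivity), mul_inv_cancel₀ (by positivity), ENNReal.ofReal_one,
    one_mul]

theorem lintegral_enorm_mul_exp_neg (hh : IsPosHomogeneous h d) (hd : 0 < d) (hhm : Measurable h)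
    (hpos : ∀ x, 0 ≤ h x) (hg : IsPosHomogeneous g a) (hgm : Measurable g)
    (hq : -1 < (finrank ℝ E + a) / d) :
    ∫⁻ x, ‖g x‖ₑ * ENNReal.ofReal (exp (-h x)) ∂μ =
      ENNReal.ofReal (Gamma (1 + (finrank ℝ E + a) / d)) * ∫⁻ x in {x | h x ≤ 1}, ‖g x‖ₑ ∂μ := by
  rw [lintegral_mul_exp_neg_eq_lintegral_sublevel hgm.enorm hhm,
    ← lintegral_exp_neg_mul_rpow_eq_Gamma hq, ← lintegral_mul_const _ (by fun_prop),
    ← lintegral_indicator measurableSet_Ioi]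
  refine lintegral_congr_ae ?_
  filter_upwards [volume.ae_ne 0] with s hs0
  rcases hs0.lt_or_gt with hs | hs
  · have hempty : {x | h x ≤ s} = ∅ :=
      eq_empty_of_forall_notMem fun x (hx : h x ≤ s) => (hpos x).not_gt (hx.trans_lt hs)
    rw [hempty, Measure.restrict_empty, lintegral_zero_measure, mul_zero,
      indicator_of_notMem (notMem_Ioi.2 hs.le)]
  · rw [indicator_of_mem (mem_Ioi.2 hs), setLIntegral_congr (hh.setOf_le_ae_eq_smul hd.ne' hs),
      hg.setLIntegral_enorm_smul_set _ (rpow_pos_of_pos hs _), ← rpow_mul hs.le, inv_mul_eq_div,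
      ENNReal.ofReal_mul (exp_pos _).le, mul_assoc]

theorem integrable_mul_exp_neg_iff (hh : IsPosHomogeneous h d) (hd : 0 < d) (hhm : Measurable h)
    (hpos : ∀ x, 0 ≤ h x) (hg : IsPosHomogeneous g a) (hgm : Measurable g)
    (hq : -1 < (finrank ℝ E + a) / d) :
    Integrable (fun x => g x * exp (-h x)) μ ↔ IntegrableOn g {x | h x ≤ 1} μ := by
  have hΓ : 0 < Gamma (1 + (finrank ℝ E + a) / d) := Gamma_pos_of_pos (by linarith)
  have hnorm : ∫⁻ x, ‖g x * exp (-h x)‖ₑ ∂μ =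
      ENNReal.ofReal (Gamma (1 + (finrank ℝ E + a) / d)) * ∫⁻ x in {x | h x ≤ 1}, ‖g x‖ₑ ∂μ := by
    simp_rw [enorm_mul, Real.enorm_of_nonneg (exp_pos _).le]
    exact hh.lintegral_enorm_mul_exp_neg hd hhm hpos hg hgm hq
  have hmeas : AEStronglyMeasurable (fun x => g x * exp (-h x)) μ :=
    (hgm.mul hhm.neg.exp).aestronglyMeasurable
  simp only [Integrable, IntegrableOn, HasFiniteIntegral, hnorm, hmeas,
    hgm.aestronglyMeasurable, true_and]
  simp [lt_top_iff_ne_top, ENNReal.mul_eq_top, hΓ]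

theorem integral_mul_exp_neg (hh : IsPosHomogeneous h d) (hd : 0 < d) (hhm : Measurable h)
    (hpos : ∀ x, 0 ≤ h x) (hg : IsPosHomogeneous g a) (hgm : Measurable g)
    (hq : -1 < (finrank ℝ E + a) / d) (hint : IntegrableOn g {x | h x ≤ 1} μ) :
    ∫ x, g x * exp (-h x) ∂μ =
      Gamma (1 + (finrank ℝ E + a) / d) * ∫ x in {x | h x ≤ 1}, g x ∂μ := by
  rw [integral_mul_exp_neg_eq_integral_sublevel hgm hhm
      ((hh.integrable_mul_exp_neg_iff hd hhm hpos hg hgm hq).2 hint),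
    ← integral_exp_neg_mul_rpow_eq_Gamma hq, ← integral_mul_const,
    ← integral_indicator measurableSet_Ioi]
  refine integral_congr_ae ?_
  filter_upwards [volume.ae_ne 0] with s hs0
  rcases hs0.lt_or_gt with hs | hs
  · have hempty : {x | h x ≤ s} = ∅ :=
      eq_empty_of_forall_notMem fun x (hx : h x ≤ s) => (hpos x).not_gt (hx.trans_lt hs)
    rw [hempty, Measure.restrict_empty, integral_zero_measure, mul_zero,
      indicator_of_notMem (notMem_Ioi.2 hs.le)]
  · rw [indicator_of_mem (mem_Ioi.2 hs), setIntegral_congr_set (hh.setOf_le_ae_eq_smul hd.ne' hs),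
      hg.setIntegral_smul_set _ (rpow_pos_of_pos hs _), ← rpow_mul hs.le, inv_mul_eq_div, mul_assoc]

end IsPosHomogeneous

end Homogeneous

/-- moments of the Lebesgue measure on the sublevel set of a positively
homogeneous function (Lasserre's formula). -/
theorem moments_positively_homogeneous
    (n : ℕ) (hn : 1 ≤ n)
    (d : ℝ) (hd : d ≠ 0)
    (h : (Fin n → ℝ) → ℝ)
    (hmeas : Measurable h)
    (hpos : ∀ x, 0 ≤ h x)
    (hhom : ∀ x : Fin n → ℝ, x ≠ 0 → ∀ t : ℝ, 0 < t → h (t • x) = t ^ d * h x)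
    (Bh : Set (Fin n → ℝ))
    (hBh : Bh = {x | h x ≤ 1})
    (hvol : volume Bh < ⊤) :
    ∀ k : Fin n → ℕ,
      ∫ x in Bh, ∏ i, x i ^ k i =
        (Real.Gamma (1 + ((n : ℝ) + (∑ i, k i : ℕ)) / d))⁻¹ *
          ∫ x : Fin n → ℝ, (∏ i, x i ^ k i) * Real.exp (-h x) := by
  intro k
  subst hBh
  have : Nonempty (Fin n) := ⟨⟨0, hn⟩⟩
  have hhom : IsPosHomogeneous h d := hhom
  have hd : 0 < d := hhom.pos_of_measure_lt_top hd hvol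
  have hmon := isPosHomogeneous_monomial k
  have hmon_meas : Measurable fun x : Fin n → ℝ => ∏ i, x i ^ k i := by fun_prop
  have hq : -1 < ((finrank ℝ (Fin n → ℝ) : ℝ) + (∑ i, k i : ℕ)) / d := by
    rw [finrank_fin_fun]
    exact neg_one_lt_zero.trans_le (by positivity)
  by_cases hint : IntegrableOn (fun x : Fin n → ℝ => ∏ i, x i ^ k i) {x | h x ≤ 1}
  · rw [hhom.integral_mul_exp_neg hd hmeas hpos hmon hmon_meas hq hint, finrank_fin_fun,
      inv_mul_cancel_left₀ (Gamma_pos_of_pos (by positivity)).ne']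
  · -- both sides vanish, by the convention for non-integrable Bochner integrals
    rw [integral_undef hint, integral_undef
      (mt (hhom.integrable_mul_exp_neg_iff hd hmeas hpos hmon hmon_meas hq).1 hint), mul_zero]
end

section
/- Even moments of the Lebesgue measure on the unit ℓ^p ball: for p > 1 and every multi-index k = (k₁,…,kₙ) with all kᵢ even, ∫_{B^n_p} x^k dx = (2/p)^n · Γ(1 + (n + |k|)/p)⁻¹ · ∏_{i=1}^n Γ((1 + kᵢ)/p), where |k| = k₁ + ⋯ + kₙ and x^k = x₁^{k₁} ⋯ xₙ^{kₙ}. -/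
/-!
For even `kᵢ` the integrand is `G x = ∏ |xᵢ| ^ kᵢ`. Both `G` and `S x = ∑ |xᵢ| ^ p` are positively
homogeneous, of degrees `|k|` and `p`. Writing `exp (-S x) = ∫_{S x}^∞ exp (-t) dt` and swapping the
integrals gives `∫ G e^{-S} = ∫_0^∞ e^{-t} M(t) dt`, where `M(t)` is the integral of `G` over
`{S ≤ t}`; rescaling by `t ^ (1/p)` shows `M(t) = t ^ ((n + |k|)/p) M(1)`, so the left side is
`Γ(1 + (n + |k|)/p) M(1)`. On the other hand `G e^{-S}` is a product of one-variable functions,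
each integrating to `(2/p) Γ((1 + kᵢ)/p)`.
-/

open MeasureTheory Set Real
open scoped ENNReal

theorem integral_abs_pow_mul_exp_neg_abs_rpow {p : ℝ} (hp : 0 < p) (k : ℕ) :
    ∫ t : ℝ, |t| ^ k * exp (-|t| ^ p) = 2 / p * Gamma ((1 + k) / p) := by
  have hk : (-1 : ℝ) < k := by linarith [k.cast_nonneg (α := ℝ)]
  have hpow : ∫ t in Ioi 0, t ^ k * exp (-t ^ p) = ∫ t in Ioi 0, t ^ (k : ℝ) * exp (-t ^ p) :=
    setIntegral_congr_fun measurableSet_Ioi fun t _ ↦ by rw [rpow_natCast]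
  rw [integral_comp_abs (f := fun t ↦ t ^ k * exp (-t ^ p)), hpow,
    integral_rpow_mul_exp_neg_rpow hp hk, add_comm]
  ring

theorem integrable_abs_pow_mul_exp_neg_abs_rpow {p : ℝ} (hp : 0 < p) (k : ℕ) :
    Integrable fun t : ℝ ↦ |t| ^ k * exp (-|t| ^ p) := by
  refine Integrable.of_integral_ne_zero ?_
  rw [integral_abs_pow_mul_exp_neg_abs_rpow hp]
  have : 0 < Gamma ((1 + k) / p) := Gamma_pos_of_pos (by positivity)
  positivity

theorem lintegral_Ioi_exp_neg_mul_rpow {a : ℝ} (ha : -1 < a) :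
    ∫⁻ t in Ioi 0, ENNReal.ofReal (exp (-t)) * ENNReal.ofReal (t ^ a) =
      ENNReal.ofReal (Gamma (1 + a)) := by
  have hs : 0 < 1 + a := by linarith
  rw [Gamma_eq_integral hs, ofReal_integral_eq_lintegral_ofReal (GammaIntegral_convergent hs)]
  · refine setLIntegral_congr_fun measurableSet_Ioi fun t _ ↦ ?_
    rw [← ENNReal.ofReal_mul (exp_pos _).le, add_sub_cancel_left]
  · exact (ae_restrict_iff' measurableSet_Ioi).2 (ae_of_all _ fun t ht ↦
      mul_nonneg (exp_pos _).le (rpow_nonneg ht.le _))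

theorem lintegral_indicator_Ici_exp_neg {s : ℝ} (hs : 0 ≤ s) :
    ∫⁻ t in Ioi 0, (Ici s).indicator (fun t ↦ ENNReal.ofReal (exp (-t))) t =
      ENNReal.ofReal (exp (-s)) := by
  have hset : (Ici s ∩ Ioi 0 : Set ℝ) =ᵐ[volume] Ioi s := by
    refine (Filter.EventuallyEq.rfl.inter Ioi_ae_eq_Ici).trans ?_
    rw [inter_eq_left.2 (Ici_subset_Ici.2 hs)]
    exact Ioi_ae_eq_Ici.symm
  rw [lintegral_indicator measurableSet_Ici, Measure.restrict_restrict measurableSet_Ici,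
    Measure.restrict_congr_set hset, ← integral_exp_neg_Ioi,
    ofReal_integral_eq_lintegral_ofReal (integrableOn_exp_neg_Ioi s)
      (ae_of_all _ fun t ↦ (exp_pos _).le)]

section Homogeneous

variable {E : Type*} [NormedAddCommGroup E] [NormedSpace ℝ E] [FiniteDimensional ℝ E]
  [MeasurableSpace E] [BorelSpace E] (μ : Measure E) [μ.IsAddHaarMeasure]

theorem lintegral_comp_smul_of_pos (f : E → ℝ≥0∞) {r : ℝ} (hr : 0 < r) :
    ∫⁻ x, f (r • x) ∂μ = ENNReal.ofReal (r ^ Module.finrank ℝ E)⁻¹ * ∫⁻ x, f x ∂μ := by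
  have := lintegral_map_equiv (μ := μ) f (MeasurableEquiv.smul₀ r hr.ne')
  rw [MeasurableEquiv.coe_smul₀, Measure.map_addHaar_smul μ hr.ne', lintegral_smul_measure,
    abs_of_pos (by positivity)] at this
  exact this.symm

variable {S : E → ℝ} {G : E → ℝ≥0∞} {p d : ℝ}

theorem setLIntegral_sublevel_eq_rpow_mul (hSm : Measurable S) (hp : 0 < p)
    (hS : ∀ r : ℝ, 0 < r → ∀ x, S (r • x) = r ^ p * S x)
    (hG : ∀ r : ℝ, 0 < r → ∀ x, G (r • x) = ENNReal.ofReal (r ^ d) * G x) {t : ℝ} (ht : 0 < t) :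
    ∫⁻ x in {x | S x ≤ t}, G x ∂μ =
      ENNReal.ofReal (t ^ ((Module.finrank ℝ E + d) / p)) * ∫⁻ x in {x | S x ≤ 1}, G x ∂μ := by
  set r := t ^ p⁻¹
  have hr : 0 < r := rpow_pos_of_pos ht _
  have hrp : r ^ p = t := rpow_inv_rpow ht.le hp.ne'
  have hind : ∀ x, {x | S x ≤ t}.indicator G (r • x) =
      ENNReal.ofReal (r ^ d) * {x | S x ≤ 1}.indicator G x := by
    intro x
    simp only [indicator_apply, mem_ofPred_eq, hS r hr, hG r hr, hrp, mul_le_iff_le_one_right ht]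
    split_ifs <;> simp
  calc ∫⁻ x in {x | S x ≤ t}, G x ∂μ
      = ENNReal.ofReal (r ^ Module.finrank ℝ E) *
          ∫⁻ x, {x | S x ≤ t}.indicator G (r • x) ∂μ := by
        rw [lintegral_comp_smul_of_pos μ _ hr, ← mul_assoc, ← ENNReal.ofReal_mul (by positivity),
          mul_inv_cancel₀ (by positivity), ENNReal.ofReal_one, one_mul,
          lintegral_indicator (measurableSet_le hSm measurable_const)]
    _ = ENNReal.ofReal (r ^ Module.finrank ℝ E) *
          (ENNReal.ofReal (r ^ d) * ∫⁻ x in {x | S x ≤ 1}, G x ∂μ) := by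
        simp_rw [hind]
        rw [lintegral_const_mul' _ _ ENNReal.ofReal_ne_top,
          lintegral_indicator (measurableSet_le hSm measurable_const)]
    _ = _ := by
        rw [← mul_assoc, ← ENNReal.ofReal_mul (by positivity), ← rpow_natCast, ← rpow_add hr,
          div_eq_inv_mul, rpow_mul ht.le]

theorem lintegral_mul_exp_neg_eq_Gamma_mul_setLIntegral (hSm : Measurable S)
    (hGm : Measurable G) (hS0 : ∀ x, 0 ≤ S x) (hp : 0 < p) (hd : 0 ≤ d)
    (hS : ∀ r : ℝ, 0 < r → ∀ x, S (r • x) = r ^ p * S x)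
    (hG : ∀ r : ℝ, 0 < r → ∀ x, G (r • x) = ENNReal.ofReal (r ^ d) * G x) :
    ∫⁻ x, G x * ENNReal.ofReal (exp (-S x)) ∂μ =
      ENNReal.ofReal (Gamma (1 + (Module.finrank ℝ E + d) / p)) *
        ∫⁻ x in {x | S x ≤ 1}, G x ∂μ := by
  set F : E → ℝ → ℝ≥0∞ := fun x t ↦ {x | S x ≤ t}.indicator G x * ENNReal.ofReal (exp (-t))
  have hFm : Measurable (Function.uncurry F) :=
    ((hGm.comp measurable_fst).indicator
      (measurableSet_le (hSm.comp measurable_fst) measurable_snd)).mul (by fun_prop)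
  have hFx : ∀ x, ∫⁻ t in Ioi 0, F x t = G x * ENNReal.ofReal (exp (-S x)) := by
    intro x
    have hexp : Measurable fun t : ℝ ↦ ENNReal.ofReal (exp (-t)) := by fun_prop
    rw [← lintegral_indicator_Ici_exp_neg (hS0 x),
      ← lintegral_const_mul _ (hexp.indicator measurableSet_Ici)]
    congr 1 with t
    by_cases h : S x ≤ t <;> simp [F, h]
  have hFt : ∀ t,
      ∫⁻ x, F x t ∂μ = (∫⁻ x in {x | S x ≤ t}, G x ∂μ) * ENNReal.ofReal (exp (-t)) := by
    intro t
    rw [lintegral_mul_const _ (hGm.indicator (measurableSet_le hSm measurable_const)),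
      lintegral_indicator (measurableSet_le hSm measurable_const)]
  calc ∫⁻ x, G x * ENNReal.ofReal (exp (-S x)) ∂μ = ∫⁻ x, (∫⁻ t in Ioi 0, F x t) ∂μ := by
        simp_rw [hFx]
    _ = ∫⁻ t in Ioi 0, ∫⁻ x, F x t ∂μ := lintegral_lintegral_swap hFm.aemeasurable
    _ = ∫⁻ t in Ioi 0, ENNReal.ofReal (exp (-t)) *
          ENNReal.ofReal (t ^ ((Module.finrank ℝ E + d) / p)) * ∫⁻ x in {x | S x ≤ 1}, G x ∂μ :=
        setLIntegral_congr_fun measurableSet_Ioi fun t ht ↦ by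
          rw [hFt, setLIntegral_sublevel_eq_rpow_mul μ hSm hp hS hG ht]
          ring
    _ = _ := by
        rw [lintegral_mul_const _ (by fun_prop), lintegral_Ioi_exp_neg_mul_rpow
          (by linarith [show 0 ≤ (Module.finrank ℝ E + d) / p by positivity])]

end Homogeneous

section LpBall

variable {ι : Type*} [Fintype ι]

theorem sum_abs_smul_rpow {r : ℝ} (hr : 0 ≤ r) (x : ι → ℝ) (p : ℝ) :
    ∑ i, |(r • x) i| ^ p = r ^ p * ∑ i, |x i| ^ p := by
  simp only [Pi.smul_apply, smul_eq_mul, abs_mul, abs_of_nonneg hr,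
    mul_rpow hr (abs_nonneg _), Finset.mul_sum]

theorem prod_abs_smul_pow (r : ℝ) (x : ι → ℝ) (k : ι → ℕ) :
    ∏ i, |(r • x) i| ^ k i = |r| ^ (∑ i, k i) * ∏ i, |x i| ^ k i := by
  simp only [Pi.smul_apply, smul_eq_mul, abs_mul, mul_pow, Finset.prod_mul_distrib,
    Finset.prod_pow_eq_pow_sum]

theorem lintegral_prod_abs_pow_mul_exp_neg_sum_abs_rpow {p : ℝ} (hp : 0 < p) (k : ι → ℕ) :
    ∫⁻ x : ι → ℝ, ENNReal.ofReal (∏ i, |x i| ^ k i) * ENNReal.ofReal (exp (-∑ i, |x i| ^ p)) =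
      ENNReal.ofReal (∏ i, 2 / p * Gamma ((1 + k i) / p)) := by
  have hfactor : ∀ x : ι → ℝ,
      ENNReal.ofReal (∏ i, |x i| ^ k i) * ENNReal.ofReal (exp (-∑ i, |x i| ^ p)) =
        ENNReal.ofReal (∏ i, |x i| ^ k i * exp (-|x i| ^ p)) := by
    intro x
    rw [← ENNReal.ofReal_mul (by positivity), Finset.prod_mul_distrib, ← Finset.sum_neg_distrib,
      exp_sum]
  simp_rw [hfactor]
  rw [volume_pi, ← ofReal_integral_eq_lintegral_ofReal
      (Integrable.fintype_prod fun i ↦ integrable_abs_pow_mul_exp_neg_abs_rpow hp (k i))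
      (ae_of_all _ fun x ↦ by positivity),
    integral_fintype_prod_eq_prod (fun i (t : ℝ) ↦ |t| ^ k i * exp (-|t| ^ p))]
  simp_rw [integral_abs_pow_mul_exp_neg_abs_rpow hp]

end LpBall

theorem even_moments_lp_ball_general
    (n : ℕ)
    (p : ℝ) (hp : 1 < p)
    (Bp : Set (Fin n → ℝ))
    (hBp : Bp = {x | ∑ i, |x i| ^ p ≤ 1})
    (k : Fin n → ℕ) (hk : ∀ i, Even (k i)) :
    ∫ x in Bp, ∏ i, x i ^ k i =
      (2 / p) ^ n * (Real.Gamma (1 + ((n : ℝ) + (∑ i, k i : ℕ)) / p))⁻¹ *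
        ∏ i, Real.Gamma ((1 + (k i : ℝ)) / p) := by
  have hp0 : 0 < p := by linarith
  have key := lintegral_mul_exp_neg_eq_Gamma_mul_setLIntegral (volume : Measure (Fin n → ℝ))
    (G := fun x ↦ ENNReal.ofReal (∏ i, |x i| ^ k i)) (S := fun x ↦ ∑ i, |x i| ^ p)
    (d := ((∑ i, k i : ℕ) : ℝ)) (by fun_prop) (by fun_prop) (fun x ↦ by positivity) hp0
    (Nat.cast_nonneg _) (fun r hr x ↦ sum_abs_smul_rpow hr.le x p) (fun r hr x ↦ by
      rw [prod_abs_smul_pow, abs_of_pos hr, ENNReal.ofReal_mul (by positivity), rpow_natCast])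
  rw [lintegral_prod_abs_pow_mul_exp_neg_sum_abs_rpow hp0, Module.finrank_fin_fun, ← hBp] at key
  have hΓ : 0 < Gamma (1 + ((n : ℝ) + (∑ i, k i : ℕ)) / p) := Gamma_pos_of_pos (by positivity)
  have hmoment : ∫ x in Bp, ∏ i, x i ^ k i =
      (∫⁻ x in Bp, ENNReal.ofReal (∏ i, |x i| ^ k i)).toReal := by
    have heven : (fun x : Fin n → ℝ ↦ ∏ i, x i ^ k i) = fun x ↦ ∏ i, |x i| ^ k i :=
      funext fun x ↦ Finset.prod_congr rfl fun i _ ↦ ((hk i).pow_abs _).symm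
    rw [heven, integral_eq_lintegral_of_nonneg_ae (ae_of_all _ fun x ↦ by positivity)
      (Measurable.aestronglyMeasurable (by fun_prop))]
  rw [hmoment, (ENNReal.eq_div_iff (ENNReal.ofReal_pos.2 hΓ).ne' ENNReal.ofReal_ne_top).2 key.symm,
    ENNReal.toReal_div, ENNReal.toReal_ofReal (by positivity), ENNReal.toReal_ofReal hΓ.le,
    Finset.prod_mul_distrib, Fin.prod_const]
  ring

/-- even moments of the Lebesgue measure on the unit `ℓᵖ` ball. -/
theorem even_moments_lp_ball
    (n : ℕ) (hn : 1 ≤ n)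
    (p : ℝ) (hp : 1 < p)
    (Bp : Set (Fin n → ℝ))
    (hBp : Bp = {x | ∑ i, |x i| ^ p ≤ 1})
    (k : Fin n → ℕ) (hk : ∀ i, Even (k i)) :
    ∫ x in Bp, ∏ i, x i ^ k i =
      (2 / p) ^ n * (Real.Gamma (1 + ((n : ℝ) + (∑ i, k i : ℕ)) / p))⁻¹ *
        ∏ i, Real.Gamma ((1 + (k i : ℝ)) / p) :=
  even_moments_lp_ball_general n p hp Bp hBp k hk
end

section
/- Two-dimensional ℓ^p ball moments via the Beta function: for p > 1 and k = (k₁,k₂) ∈ ℕ², ∫_{B²_p} x₁^{2k₁} x₂^{2k₂} dx = (2 / ((1 + k₁ + k₂) p)) · Β((1 + 2k₁)/p, (1 + 2k₂)/p). -/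
open MeasureTheory Set

/-!
Fubini slices the ball `|x|^p + |y|^p ≤ 1` along `x`: the slice is `|y| ≤ (1 - |x|^p)^(1/p)`,
so integrating `y^(2k₂)` over it leaves `2 (1 - |x|^p)^((2k₂+1)/p) / (2k₂+1)`. The remaining
integrand is even in `x`, and on `(0, 1]` the substitution `u = x^p` turns it into the Beta
integral `Β((2k₁+1)/p, (2k₂+1)/p + 1) / p`; the recurrence `Β(a, b+1) = b/(a+b) · Β(a, b)`
yields the stated constant.
-/

namespace ProbabilityTheory

theorem integral_Ioc_rpow_mul_one_sub_rpow {α β : ℝ} (hα : 0 < α) (hβ : 0 < β) :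
    ∫ x in Ioc 0 1, x ^ (α - 1) * (1 - x) ^ (β - 1) = beta α β := by
  have hcast : Complex.betaIntegral α β =
      ↑(∫ x in (0 : ℝ)..1, x ^ (α - 1) * (1 - x) ^ (β - 1)) := by
    rw [Complex.betaIntegral, ← intervalIntegral.integral_ofReal]
    refine intervalIntegral.integral_congr fun x hx => ?_
    rw [uIcc_of_le zero_le_one] at hx
    rw [Complex.ofReal_mul, Complex.ofReal_cpow hx.1, Complex.ofReal_cpow (sub_nonneg.2 hx.2)]
    push_cast
    rfl
  rw [beta_eq_betaIntegralReal α β hα hβ, hcast, Complex.ofReal_re,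
    intervalIntegral.integral_of_le zero_le_one]

theorem beta_add_one_right {a b : ℝ} (ha : 0 < a) (hb : 0 < b) :
    beta a (b + 1) = b / (a + b) * beta a b := by
  rw [beta, beta, ← add_assoc, Real.Gamma_add_one hb.ne', Real.Gamma_add_one (by positivity)]
  have := (Real.Gamma_pos_of_pos (add_pos ha hb)).ne'
  field_simp

end ProbabilityTheory

open ProbabilityTheory

theorem integral_Ioc_comp_rpow {E : Type*} [NormedAddCommGroup E] [NormedSpace ℝ E]
    {p : ℝ} (hp : 0 < p) (g : ℝ → E) :
    ∫ x in Ioc 0 1, (p * x ^ (p - 1)) • g (x ^ p) = ∫ u in Ioc 0 1, g u := by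
  have himage : (· ^ p) '' Ioc (0 : ℝ) 1 = Ioc 0 1 := by
    refine Subset.antisymm ?_ fun u hu => ⟨u ^ p⁻¹, ?_, ?_⟩
    · rintro _ ⟨x, hx, rfl⟩
      exact ⟨Real.rpow_pos_of_pos hx.1 p, Real.rpow_le_one hx.1.le hx.2 hp.le⟩
    · exact ⟨Real.rpow_pos_of_pos hu.1 _, Real.rpow_le_one hu.1.le hu.2 (inv_nonneg.2 hp.le)⟩
    · change (u ^ p⁻¹) ^ p = u
      rw [← Real.rpow_mul hu.1.le, inv_mul_cancel₀ hp.ne', Real.rpow_one]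
  conv_rhs => rw [← himage]
  rw [integral_image_eq_integral_abs_deriv_smul measurableSet_Ioc
    (fun x hx => (Real.hasDerivAt_rpow_const (Or.inl hx.1.ne')).hasDerivWithinAt)
    ((Real.strictMonoOn_rpow_Ici_of_exponent_pos hp).injOn.mono fun _ hx => hx.1.le)]
  refine setIntegral_congr_fun measurableSet_Ioc fun x hx => ?_
  rw [abs_of_pos (mul_pos hp (Real.rpow_pos_of_pos hx.1 _))]

theorem integral_Ioc_rpow_mul_one_sub_rpow_rpow {p q c : ℝ} (hp : 0 < p) (hq : -1 < q)
    (hc : -1 < c) :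
    ∫ x in Ioc 0 1, x ^ q * (1 - x ^ p) ^ c = beta ((q + 1) / p) (c + 1) / p := by
  have hpointwise : ∀ x ∈ Ioc (0 : ℝ) 1, x ^ q * (1 - x ^ p) ^ c =
      p⁻¹ * ((p * x ^ (p - 1)) • ((x ^ p) ^ ((q + 1) / p - 1) * (1 - x ^ p) ^ (c + 1 - 1))) := by
    intro x hx
    have hexp : p * ((q + 1) / p - 1) = q + 1 - p := by field_simp
    have hpow : x ^ (p - 1) * x ^ (q + 1 - p) = x ^ q := by
      rw [← Real.rpow_add hx.1]; ring_nf
    rw [← Real.rpow_mul hx.1.le, hexp, smul_eq_mul, add_sub_cancel_right, ← hpow]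
    field_simp
  have hq' : 0 < (q + 1) / p := div_pos (by linarith) hp
  rw [setIntegral_congr_fun measurableSet_Ioc hpointwise, integral_const_mul,
    integral_Ioc_comp_rpow hp fun u => u ^ ((q + 1) / p - 1) * (1 - u) ^ (c + 1 - 1),
    integral_Ioc_rpow_mul_one_sub_rpow hq' (by linarith), inv_mul_eq_div]

theorem setIntegral_Icc_neg_comp_abs (h : ℝ → ℝ) (a : ℝ) :
    ∫ x in Icc (-a) a, h |x| = 2 * ∫ x in Ioc 0 a, h x := by
  have hind : (Icc (-a) a).indicator (fun x => h |x|) = fun x => (Iic a).indicator h |x| := by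
    ext x
    simp only [indicator, mem_Icc, mem_Iic, ← abs_le]
  rw [← integral_indicator measurableSet_Icc, hind, integral_comp_abs,
    setIntegral_indicator measurableSet_Iic, Ioi_inter_Iic]

theorem integral_Icc_pow_two_mul_mul_one_sub_abs_rpow {p c : ℝ} (hp : 0 < p) (hc : -1 < c)
    (k : ℕ) :
    ∫ x in Icc (-1 : ℝ) 1, x ^ (2 * k) * (1 - |x| ^ p) ^ c =
      2 * beta ((2 * k + 1) / p) (c + 1) / p := by
  have habs : ∀ x ∈ Icc (-1 : ℝ) 1,
      x ^ (2 * k) * (1 - |x| ^ p) ^ c = |x| ^ (2 * k : ℝ) * (1 - |x| ^ p) ^ c := fun x _ => by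
    rw [← (even_two_mul k).pow_abs, ← Real.rpow_natCast, Nat.cast_mul, Nat.cast_ofNat]
  rw [setIntegral_congr_fun measurableSet_Icc habs,
    setIntegral_Icc_neg_comp_abs fun x => x ^ (2 * k : ℝ) * (1 - x ^ p) ^ c,
    integral_Ioc_rpow_mul_one_sub_rpow_rpow hp (neg_one_lt_zero.trans_le (by positivity)) hc]
  ring

theorem setOf_abs_rpow_le {p t : ℝ} (hp : 0 < p) (ht : 0 ≤ t) :
    {y : ℝ | |y| ^ p ≤ t} = Icc (-t ^ p⁻¹) (t ^ p⁻¹) := by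
  ext y
  rw [mem_ofPred_eq, ← Real.le_rpow_inv_iff_of_pos (abs_nonneg y) ht hp, abs_le, mem_Icc]

theorem setOf_abs_rpow_le_one {p : ℝ} (hp : 0 < p) : {y : ℝ | |y| ^ p ≤ 1} = Icc (-1) 1 := by
  rw [setOf_abs_rpow_le hp zero_le_one, Real.one_rpow]

theorem integral_setOf_abs_rpow_le_pow_two_mul {p t : ℝ} (hp : 0 < p) (ht : 0 ≤ t) (k : ℕ) :
    ∫ y in {y : ℝ | |y| ^ p ≤ t}, y ^ (2 * k) = 2 * t ^ ((2 * k + 1) / p) / (2 * k + 1) := by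
  have hr : (t ^ p⁻¹) ^ (2 * k + 1) = t ^ ((2 * k + 1) / p) := by
    rw [← Real.rpow_natCast, ← Real.rpow_mul ht]
    push_cast
    ring_nf
  rw [setOf_abs_rpow_le hp ht, integral_Icc_eq_integral_Ioc,
    ← intervalIntegral.integral_of_le (neg_le_self (by positivity)), integral_pow,
    (odd_two_mul_add_one k).neg_pow, hr]
  push_cast
  ring

theorem integral_lpBall_slice_pow_two_mul {p : ℝ} (hp : 0 < p) (k : ℕ) (x : ℝ) :
    ∫ y in {y : ℝ | |y| ^ p ≤ 1 - |x| ^ p}, y ^ (2 * k) =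
      (Icc (-1 : ℝ) 1).indicator
        (fun x => 2 * (1 - |x| ^ p) ^ ((2 * k + 1 : ℝ) / p) / (2 * k + 1)) x := by
  by_cases hx : x ∈ Icc (-1) 1
  · rw [indicator_of_mem hx, integral_setOf_abs_rpow_le_pow_two_mul hp]
    rw [← setOf_abs_rpow_le_one hp] at hx
    exact sub_nonneg.2 hx
  · have hempty : {y : ℝ | |y| ^ p ≤ 1 - |x| ^ p} = ∅ := by
      rw [← setOf_abs_rpow_le_one hp, mem_ofPred_eq, not_le] at hx
      ext y
      simp only [mem_ofPred_eq, mem_empty_iff_false, iff_false, not_le]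
      linarith [Real.rpow_nonneg (abs_nonneg y) p]
    rw [hempty, Measure.restrict_empty, integral_zero_measure, indicator_of_notMem hx]

theorem integral_lpBall_mul_pow_two_mul {p : ℝ} (hp : 0 < p) {f : ℝ → ℝ} (hf : Continuous f)
    (k : ℕ) :
    ∫ z in {z : ℝ × ℝ | |z.1| ^ p + |z.2| ^ p ≤ 1}, f z.1 * z.2 ^ (2 * k) =
      2 / (2 * k + 1 : ℝ) *
        ∫ x in Icc (-1 : ℝ) 1, f x * (1 - |x| ^ p) ^ ((2 * k + 1 : ℝ) / p) := by
  set S := {z : ℝ × ℝ | |z.1| ^ p + |z.2| ^ p ≤ 1}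
  have hS : IsCompact S := by
    have hsub : S ⊆ Icc (-1) 1 ×ˢ Icc (-1) 1 := fun z (hz : |z.1| ^ p + |z.2| ^ p ≤ 1) => by
      have h1 := Real.rpow_nonneg (abs_nonneg z.1) p
      have h2 := Real.rpow_nonneg (abs_nonneg z.2) p
      rw [← setOf_abs_rpow_le_one hp]
      exact ⟨show |z.1| ^ p ≤ 1 by linarith, show |z.2| ^ p ≤ 1 by linarith⟩
    exact (isCompact_Icc.prod isCompact_Icc).of_isClosed_subset
      (isClosed_le (by fun_prop (disch := exact hp.le)) continuous_const) hsub
  have hint : Integrable (S.indicator fun z => f z.1 * z.2 ^ (2 * k)) (volume.prod volume) := by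
    rw [← Measure.volume_eq_prod, integrable_indicator_iff hS.measurableSet]
    exact ContinuousOn.integrableOn_compact hS (by fun_prop)
  have hslice : ∀ x y, S.indicator (fun z => f z.1 * z.2 ^ (2 * k)) (x, y) =
      {y : ℝ | |y| ^ p ≤ 1 - |x| ^ p}.indicator (fun y => f x * y ^ (2 * k)) y := by
    intro x y
    simp only [indicator, S, mem_ofPred_eq, le_sub_iff_add_le']
  rw [← integral_indicator hS.measurableSet, Measure.volume_eq_prod, integral_prod _ hint,
    ← integral_const_mul, ← integral_indicator measurableSet_Icc]
  congr 1
  ext x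
  simp only [hslice]
  rw [integral_indicator (measurableSet_le (by fun_prop (disch := exact hp.le)) measurable_const),
    integral_const_mul, integral_lpBall_slice_pow_two_mul hp]
  by_cases hx : x ∈ Icc (-1) 1
  · simp only [indicator_of_mem hx]
    ring
  · simp only [indicator_of_notMem hx, mul_zero]

/-- two-dimensional `ℓᵖ` ball moments via the Beta function
`Β(a,b) = Γ(a)Γ(b)/Γ(a+b)`. -/
theorem two_dim_lp_ball_moments
    (p : ℝ) (hp : 1 < p)
    (Bp : Set (Fin 2 → ℝ))
    (hBp : Bp = {x | |x 0| ^ p + |x 1| ^ p ≤ 1})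
    (k₁ k₂ : ℕ) :
    ∫ x in Bp, x 0 ^ (2 * k₁) * x 1 ^ (2 * k₂) =
      2 / ((1 + (k₁ : ℝ) + (k₂ : ℝ)) * p) *
        (Real.Gamma ((1 + 2 * (k₁ : ℝ)) / p) * Real.Gamma ((1 + 2 * (k₂ : ℝ)) / p) /
          Real.Gamma ((1 + 2 * (k₁ : ℝ)) / p + (1 + 2 * (k₂ : ℝ)) / p)) := by
  have hp0 : 0 < p := zero_lt_one.trans hp
  have hprod : ∫ x in Bp, x 0 ^ (2 * k₁) * x 1 ^ (2 * k₂) =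
      ∫ z in {z : ℝ × ℝ | |z.1| ^ p + |z.2| ^ p ≤ 1}, z.1 ^ (2 * k₁) * z.2 ^ (2 * k₂) := by
    subst hBp
    exact ((volume_preserving_piFinTwo fun _ => ℝ).setIntegral_preimage_emb
      (MeasurableEquiv.measurableEmbedding _) (fun z : ℝ × ℝ => z.1 ^ (2 * k₁) * z.2 ^ (2 * k₂))
      {z | |z.1| ^ p + |z.2| ^ p ≤ 1})
  rw [hprod, integral_lpBall_mul_pow_two_mul hp0 (continuous_pow _),
    integral_Icc_pow_two_mul_mul_one_sub_abs_rpow hp0 (neg_one_lt_zero.trans_le (by positivity)),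
    beta_add_one_right (by positivity) (by positivity), beta]
  simp only [add_comm (1 : ℝ) (2 * _)]
  field_simp
  ring
end
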